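/- For every integer Q ≥ 2 and every real γ > 0, the exposure-time estimand weight of the immediate treatment effect estimator at the maximal exposure time s = Q is strictly negative: w₁(Q,γ,Q) = −6γ/((Q+1)(γQ+2)) < 0. Hence, for γ > 0 the IT estimator is a weighted sum of exposure time-varying treatment effects with at least one negative weight, and its expectation can be negative even when all δ_s ≥ 0. -/
import Mathlib


/-- The estimand weight `w₁(Q,γ,s)` of the exposure time-varying treatment effect
`δ_s` in the misspecified immediate treatment effect estimator. -/
noncomputable def w1 (Q : ℕ) (γ : ℝ) (s : ℕ) : ℝ :=
  6 * ((s : ℝ) - (Q : ℝ) - 1) *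
      ((1 + 2 * γ * (Q : ℝ)) * (s : ℝ) - (1 + γ + γ * (Q : ℝ)) * (Q : ℝ)) /
    ((Q : ℝ) * ((Q : ℝ) + 1) * (γ * (Q : ℝ) ^ 2 + 2 * (Q : ℝ) - γ * (Q : ℝ) - 2))

/-- For `γ > 0`, the exposure-time estimand weight of the immediate treatment effect
estimator at the maximal exposure time `s = Q` equals `−6γ/((Q+1)(γQ+2))` and is
strictly negative. -/
theorem IT_exposure_weight_max_negative (Q : ℕ) (hQ : 2 ≤ Q) (γ : ℝ) (hγ : 0 < γ) :
    w1 Q γ Q = -6 * γ / (((Q : ℝ) + 1) * (γ * (Q : ℝ) + 2))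
    ∧ w1 Q γ Q < 0 := by
  have hQ2 : (2 : ℝ) ≤ (Q : ℝ) := by exact_mod_cast hQ
  have hQ0 : (0 : ℝ) < Q := by linarith
  have hQ1 : (0 : ℝ) < (Q : ℝ) + 1 := by linarith
  have hQm1 : (0 : ℝ) < (Q : ℝ) - 1 := by linarith
  have hg2 : (0 : ℝ) < γ * Q + 2 := by nlinarith
  have heq : w1 Q γ Q = -6 * γ / (((Q : ℝ) + 1) * (γ * (Q : ℝ) + 2)) := by
    unfold w1
    have hden : (Q : ℝ) * ((Q : ℝ) + 1) * (γ * (Q : ℝ) ^ 2 + 2 * (Q : ℝ) - γ * (Q : ℝ) - 2)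
        = ((Q : ℝ) * ((Q : ℝ) - 1)) * (((Q : ℝ) + 1) * (γ * (Q : ℝ) + 2)) := by ring
    rw [hden]
    rw [div_eq_div_iff (by positivity) (by positivity)]
    ring
  refine ⟨heq, ?_⟩
  rw [heq]
  apply div_neg_of_neg_of_pos
  · nlinarith
  · positivity
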